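/- Let β = [[−a, l, 0], [m, A, −𝕁ᵗl], [0, −ᵗm𝕁, a]] be an element of 𝔰𝔬(2,n+1) in the displayed block form, and assume β² = −Id_{n+3}. Then the pairing satisfies l·m = −(1 + a²); in particular l·m < 0, and the lightlike vectors m and 𝕁ᵗl are linearly independent in ℝ^{n+1}. -/

import Mathlib

/-! Reading off three entries of `β * β = -1` gives `a² + l ⬝ m = -1` (the top-left corner)
and the vanishing of the two off-diagonal corners, which say that `m` and `𝕁ᵗl` are lightlike.
Two lightlike vectors with nonzero pairing are linearly independent: pairing a vanishing
combination `s m + t 𝕁ᵗl` with each of the two vectors kills one coefficient at a time. -/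

open Matrix

/- Setup: the Lie algebra 𝔰𝔬(2,n+1) in block form.  The index type of the
(n+3)×(n+3) matrices is `Fin 1 ⊕ (Fin (n+1) ⊕ Fin 1)`, corresponding to the
decomposition ℝ^{n+3} = ℝ ⊕ ℝ^{n+1} ⊕ ℝ. -/

/-- The index type for (n+3)×(n+3) block matrices. -/
abbrev Idx (n : ℕ) := Fin 1 ⊕ (Fin (n + 1) ⊕ Fin 1)

/-- The Minkowski Gram matrix 𝕁 = diag(−1, 1, …, 1) of signature (1,n) on ℝ^{n+1}. -/
def MinkJ (n : ℕ) : Matrix (Fin (n + 1)) (Fin (n + 1)) ℝ :=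
  Matrix.diagonal fun i => if i = 0 then (-1 : ℝ) else 1

/-- The block matrix β = [[−a, l, 0], [m, A, −𝕁ᵗl], [0, −ᵗm𝕁, a]]. -/
def betaMat (n : ℕ) (a : ℝ) (m l : Fin (n + 1) → ℝ)
    (A : Matrix (Fin (n + 1)) (Fin (n + 1)) ℝ) : Matrix (Idx n) (Idx n) ℝ :=
  Matrix.of fun i j =>
    match i, j with
    | Sum.inl _, Sum.inl _ => -a
    | Sum.inl _, Sum.inr (Sum.inl k) => l k
    | Sum.inl _, Sum.inr (Sum.inr _) => 0
    | Sum.inr (Sum.inl k), Sum.inl _ => m k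
    | Sum.inr (Sum.inl k), Sum.inr (Sum.inl k') => A k k'
    | Sum.inr (Sum.inl k), Sum.inr (Sum.inr _) => -((MinkJ n).mulVec l k)
    | Sum.inr (Sum.inr _), Sum.inl _ => 0
    | Sum.inr (Sum.inr _), Sum.inr (Sum.inl k) => -(Matrix.vecMul m (MinkJ n) k)
    | Sum.inr (Sum.inr _), Sum.inr (Sum.inr _) => a

theorem linearIndependent_pair_of_isotropic {K ι : Type*} [Field K] [Fintype ι]
    {M : Matrix ι ι K} (hM : M.IsSymm) {u v : ι → K} (hu : u ⬝ᵥ M *ᵥ u = 0)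
    (hv : v ⬝ᵥ M *ᵥ v = 0) (huv : u ⬝ᵥ M *ᵥ v ≠ 0) : LinearIndependent K ![u, v] := by
  have hvu : v ⬝ᵥ M *ᵥ u = u ⬝ᵥ M *ᵥ v := by
    rw [dotProduct_mulVec, dotProduct_comm, ← mulVec_transpose, hM.eq]
  rw [LinearIndependent.pair_iff]
  intro s t h
  have hs : s * (v ⬝ᵥ M *ᵥ u) = 0 := by
    simpa [mulVec_add, mulVec_smul, hv] using congrArg (v ⬝ᵥ M *ᵥ ·) h
  have ht : t * (u ⬝ᵥ M *ᵥ v) = 0 := by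
    simpa [mulVec_add, mulVec_smul, hu] using congrArg (u ⬝ᵥ M *ᵥ ·) h
  rw [hvu] at hs
  exact ⟨(mul_eq_zero.1 hs).resolve_right huv, (mul_eq_zero.1 ht).resolve_right huv⟩

theorem MinkJ_isSymm (n : ℕ) : (MinkJ n).IsSymm :=
  isSymm_diagonal _

theorem MinkJ_mul_self (n : ℕ) : MinkJ n * MinkJ n = 1 := by
  rw [MinkJ, diagonal_mul_diagonal, ← diagonal_one]
  congr 1
  ext i
  split_ifs <;> norm_num

theorem MinkJ_mulVec_mulVec (n : ℕ) (v : Fin (n + 1) → ℝ) :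
    MinkJ n *ᵥ (MinkJ n *ᵥ v) = v := by
  rw [mulVec_mulVec, MinkJ_mul_self, one_mulVec]

section betaMat

variable {n : ℕ} {a : ℝ} {m l : Fin (n + 1) → ℝ}
  {A : Matrix (Fin (n + 1)) (Fin (n + 1)) ℝ}

theorem betaMat_mul_self_inl_inl :
    (betaMat n a m l A * betaMat n a m l A) (.inl 0) (.inl 0) = a ^ 2 + l ⬝ᵥ m := by
  simp [mul_apply, betaMat, Fintype.sum_sum_type, dotProduct, sq]

theorem betaMat_mul_self_inl_inr :
    (betaMat n a m l A * betaMat n a m l A) (.inl 0) (.inr (.inr 0)) =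
      -(l ⬝ᵥ MinkJ n *ᵥ l) := by
  simp [mul_apply, betaMat, Fintype.sum_sum_type, dotProduct]

theorem betaMat_mul_self_inr_inl :
    (betaMat n a m l A * betaMat n a m l A) (.inr (.inr 0)) (.inl 0) =
      -(m ⬝ᵥ MinkJ n *ᵥ m) := by
  rw [dotProduct_mulVec]
  simp [mul_apply, betaMat, Fintype.sum_sum_type, dotProduct]

theorem dotProduct_eq_of_betaMat_mul_self_eq_neg_one
    (hβ : betaMat n a m l A * betaMat n a m l A = -1) :
    l ⬝ᵥ m = -(1 + a ^ 2) ∧ l ⬝ᵥ MinkJ n *ᵥ l = 0 ∧ m ⬝ᵥ MinkJ n *ᵥ m = 0 := by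
  have hll := congrFun (congrFun hβ (.inl 0)) (.inl 0)
  have hlJl := congrFun (congrFun hβ (.inl 0)) (.inr (.inr 0))
  have hmJm := congrFun (congrFun hβ (.inr (.inr 0))) (.inl 0)
  rw [betaMat_mul_self_inl_inl] at hll
  rw [betaMat_mul_self_inl_inr] at hlJl
  rw [betaMat_mul_self_inr_inl] at hmJm
  simp only [Matrix.neg_apply, one_apply, ↓reduceIte, reduceCtorEq, neg_zero, neg_eq_zero]
    at hll hlJl hmJm
  exact ⟨by linarith, hlJl, hmJm⟩

end betaMat

theorem stmt3_general (n : ℕ) (a : ℝ) (m l : Fin (n + 1) → ℝ)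
    (A : Matrix (Fin (n + 1)) (Fin (n + 1)) ℝ)
    (hβ : betaMat n a m l A * betaMat n a m l A = -1) :
    l ⬝ᵥ m = -(1 + a ^ 2) ∧ l ⬝ᵥ m < 0 ∧
      LinearIndependent ℝ ![m, (MinkJ n).mulVec l] := by
  obtain ⟨hlm, hlJl, hmJm⟩ := dotProduct_eq_of_betaMat_mul_self_eq_neg_one hβ
  have hneg : l ⬝ᵥ m < 0 := hlm ▸ neg_neg_of_pos (by positivity)
  refine ⟨hlm, hneg, linearIndependent_pair_of_isotropic (MinkJ_isSymm n) hmJm ?_ ?_⟩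
  · rw [MinkJ_mulVec_mulVec, dotProduct_comm, hlJl]
  · rw [MinkJ_mulVec_mulVec, dotProduct_comm]
    exact hneg.ne

/-- If β ∈ 𝔰𝔬(2,n+1) in the displayed block form satisfies β² = −Id,
then l·m = −(1 + a²); in particular l·m < 0, and the lightlike vectors m and 𝕁ᵗl
are linearly independent in ℝ^{n+1}. -/
theorem stmt3 (n : ℕ) (hn : 1 ≤ n) (a : ℝ) (m l : Fin (n + 1) → ℝ)
    (A : Matrix (Fin (n + 1)) (Fin (n + 1)) ℝ)
    (hA : Aᵀ * MinkJ n + MinkJ n * A = 0)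
    (hβ : betaMat n a m l A * betaMat n a m l A = -1) :
    l ⬝ᵥ m = -(1 + a ^ 2) ∧ l ⬝ᵥ m < 0 ∧
      LinearIndependent ℝ ![m, (MinkJ n).mulVec l] :=
  stmt3_general n a m l A hβ
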